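/- Let (J,γ) be a nilpotent metrised real Jordan algebra of dimension n. Then there exists a basis e₁,…,e_n of J putting (J,γ) in semi-canonical form, and moreover the basis and an integer m ≥ 0 with 2m ≤ n can be chosen so that the partition S equals {{1,n},{2,n-1},…,{m,n+1-m},{m+1},…,{n-m}} (i.e., γ(e_k,e_{n+1-k}) = 1 and γ(e_k,e_k) = γ(e_{n+1-k},e_{n+1-k}) = 0 for 1 ≤ k ≤ m, γ(e_i,e_i) = ±1 for m+1 ≤ i ≤ n-m, and all other entries of γ in this basis vanish) and so that γ(e_k,e_k) ≥ γ(e_l,e_l) for all m+1 ≤ k < l ≤ n-m. -/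

import Mathlib

/-!
The right multiplications `R_y = mul · y` form a jointly nilpotent family of `γ`-self-adjoint
operators. Induct on the dimension. Nilpotence gives `x ≠ 0` killed by every `R_y`, and
self-adjointness makes `x^⊥` invariant.

* If some such `x` is anisotropic, scale it so that `γ(x,x) = ±1`, take a frame of `x^⊥`, and
  insert `x` between the positive and the negative vectors.
* Otherwise `γ(x,x) = 0`. Pick `y` with `γ(x,y) = 1` and `γ(y,y) = 0`. Then
  `W = {x,y}^⊥` is a nondegenerate complement of `span {x, y}`. It stands in for `x^⊥ / ℝx`,
  with the operators compressed by the orthogonal projection onto `W`. A frame of `W` gives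
  the frame `x, (frame of W), y` of the whole space: `R_y` sends a vector of `W` into
  `W + ℝx`, and sends `y` into `x^⊥ = ℝx + W`.

Nondegeneracy of the Gram matrix makes the frame linearly independent, so it is a basis.
-/

open Module

def cas {A : Type*} [AddCommGroup A] [Module ℝ A]
    (mul : A →ₗ[ℝ] A →ₗ[ℝ] A) : ℕ → Submodule ℝ A
  | 0 => ⊥
  | (k + 1) =>
    { carrier := {x | ∀ y, mul x y ∈ cas mul k}
      add_mem' := fun {a b} ha hb y => by
        simpa [map_add, LinearMap.add_apply] using (cas mul k).add_mem (ha y) (hb y)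
      zero_mem' := fun y => by simp
      smul_mem' := fun c a ha y => by
        simpa [map_smul, LinearMap.smul_apply] using (cas mul k).smul_mem c (ha y) }

open Submodule

section JointNilpotence

variable {V U : Type*} [AddCommGroup V] [Module ℝ V] [AddCommGroup U] [Module ℝ U] {ι : Type*}

def jointUpperSeries (S : ι → Module.End ℝ V) : ℕ → Submodule ℝ V
  | 0 => ⊥
  | k + 1 => ⨅ i, (jointUpperSeries S k).comap (S i)

lemma mem_jointUpperSeries_succ {S : ι → Module.End ℝ V} {k : ℕ} {x : V} :
    x ∈ jointUpperSeries S (k + 1) ↔ ∀ i, S i x ∈ jointUpperSeries S k := by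
  simp [jointUpperSeries]

def JointlyNilpotent (S : ι → Module.End ℝ V) : Prop :=
  ∃ k, jointUpperSeries S k = ⊤

lemma JointlyNilpotent.exists_ne_zero_forall_eq_zero [Nontrivial V] {S : ι → Module.End ℝ V}
    (hS : JointlyNilpotent S) : ∃ x ≠ 0, ∀ i, S i x = 0 := by
  by_contra! h
  have hbot (k : ℕ) : jointUpperSeries S k = ⊥ := by
    induction k with
    | zero => rfl
    | succ k ih =>
      refine eq_bot_iff.mpr fun x hx => (mem_bot ℝ).mpr ?_
      by_contra hx0
      obtain ⟨i, hi⟩ := h x hx0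
      simpa [ih, hi] using mem_jointUpperSeries_succ.mp hx i
  obtain ⟨k, hk⟩ := hS
  exact bot_ne_top (hbot k ▸ hk)

lemma JointlyNilpotent.of_intertwining {S : ι → Module.End ℝ V} {T : ι → Module.End ℝ U}
    (φ : V →ₗ[ℝ] U) {B : Submodule ℝ V} (hB : ∀ i, ∀ b ∈ B, S i b ∈ B)
    (hφ : ∀ i, ∀ b ∈ B, φ (S i b) = T i (φ b)) (hsurj : ∀ u, ∃ b ∈ B, φ b = u)
    (hS : JointlyNilpotent S) : JointlyNilpotent T := by
  have hmap (k : ℕ) : ∀ b ∈ B, b ∈ jointUpperSeries S k → φ b ∈ jointUpperSeries T k := by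
    induction k with
    | zero => intro b _ hb; simp_all [jointUpperSeries]
    | succ k ih =>
      intro b hbB hb
      refine mem_jointUpperSeries_succ.mpr fun i => ?_
      rw [← hφ i b hbB]
      exact ih _ (hB i b hbB) (mem_jointUpperSeries_succ.mp hb i)
  obtain ⟨k, hk⟩ := hS
  refine ⟨k, eq_top_iff.mpr fun u _ => ?_⟩
  obtain ⟨b, hbB, rfl⟩ := hsurj u
  exact hmap k b hbB (hk ▸ mem_top)

lemma cas_eq_jointUpperSeries {A : Type*} [AddCommGroup A] [Module ℝ A]
    (mul : A →ₗ[ℝ] A →ₗ[ℝ] A) (k : ℕ) : cas mul k = jointUpperSeries (fun y => mul.flip y) k := by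
  induction k with
  | zero => rfl
  | succ k ih =>
    ext x
    rw [mem_jointUpperSeries_succ, ← ih]
    rfl

end JointNilpotence

/-- Indices are `0, …, n-1` with `n = 2m + p + q`: the first `m` and the last `m` indices form
the hyperbolic pairs `{i, n-1-i}`; the middle indices are `p` with `γ(eᵢ,eᵢ) = 1` followed by
`q` with `γ(eᵢ,eᵢ) = -1`. -/
def canonicalGram (m p q i j : ℕ) : ℝ :=
  if i + j + 1 = 2 * m + p + q ∧ (i < m ∨ j < m) then 1
  else if i = j ∧ m ≤ i ∧ i < m + p then 1
  else if i = j ∧ m + p ≤ i ∧ i < m + p + q then -1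
  else 0

section CanonicalGram

variable {m p q i j : ℕ}

lemma canonicalGram_comm (m p q i j : ℕ) : canonicalGram m p q i j = canonicalGram m p q j i := by
  unfold canonicalGram
  split_ifs <;> first | omega | rfl

lemma exists_canonicalGram_ne_zero_and_eq_zero_of_ne (hi : i < 2 * m + p + q) :
    ∃ k < 2 * m + p + q, canonicalGram m p q k i ≠ 0 ∧ ∀ j ≠ i, canonicalGram m p q k j = 0 := by
  by_cases h : i < m ∨ m + p + q ≤ i
  · refine ⟨2 * m + p + q - 1 - i, by omega, ?_, fun j hj => ?_⟩ <;> unfold canonicalGram <;>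
      split_ifs <;> first | omega | norm_num
  · refine ⟨i, hi, ?_, fun j hj => ?_⟩ <;> unfold canonicalGram <;>
      split_ifs <;> first | omega | norm_num

lemma canonicalGram_insert {p' q' : ℕ} (hp : p ≤ p') (hp' : p' ≤ p + 1)
    (hpq : p' + q' = p + q + 1) :
    canonicalGram m p' q' (if i < m + p then i else i + 1) (if j < m + p then j else j + 1) =
      canonicalGram m p q i j := by
  unfold canonicalGram
  split_ifs <;> first | omega | norm_num

lemma canonicalGram_insert_row {p' q' : ℕ} (hpq : p' + q' = p + q + 1) (j : ℕ) :
    canonicalGram m p' q' (m + p) (if j < m + p then j else j + 1) = 0 := by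
  unfold canonicalGram
  split_ifs <;> first | omega | rfl

lemma canonicalGram_succ_succ :
    canonicalGram (m + 1) p q (i + 1) (j + 1) = canonicalGram m p q i j := by
  unfold canonicalGram
  split_ifs <;> first | omega | norm_num

lemma canonicalGram_pair (hi : i < m) (hij : i + j + 1 = 2 * m + p + q) :
    canonicalGram m p q i j = 1 ∧ canonicalGram m p q i i = 0 ∧ canonicalGram m p q j j = 0 := by
  unfold canonicalGram
  refine ⟨?_, ?_, ?_⟩ <;> split_ifs <;> first | omega | rfl

lemma canonicalGram_self_eq_one_or_neg_one (hi : m ≤ i) (hin : i + m < 2 * m + p + q) :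
    canonicalGram m p q i i = 1 ∨ canonicalGram m p q i i = -1 := by
  unfold canonicalGram
  split_ifs <;> first | omega | norm_num

lemma canonicalGram_eq_zero (hpair : ¬(i + j + 1 = 2 * m + p + q ∧ (i < m ∨ j < m)))
    (hdiag : ¬(i = j ∧ m ≤ i ∧ i + m < 2 * m + p + q)) : canonicalGram m p q i j = 0 := by
  unfold canonicalGram
  split_ifs <;> first | omega | rfl

lemma canonicalGram_self_le_self_of_lt (hi : m ≤ i) (hij : i < j) (hj : j + m < 2 * m + p + q) :
    canonicalGram m p q j j ≤ canonicalGram m p q i i := by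
  unfold canonicalGram
  split_ifs <;> first | omega | norm_num

end CanonicalGram

section Frames

variable {V : Type*} [AddCommGroup V] [Module ℝ V] {ι : Type*}

structure IsCanonicalFrame {n : ℕ} (S : ι → Module.End ℝ V) (γ : LinearMap.BilinForm ℝ V)
    (m p q : ℕ) (e : Fin n → V) : Prop where
  card_eq : n = 2 * m + p + q
  span_eq_top : span ℝ (Set.range e) = ⊤
  triangular : ∀ i k, S i (e k) ∈ span ℝ (e '' Set.Iio k)
  gram : ∀ k l, γ (e k) (e l) = canonicalGram m p q k l

variable {S : ι → Module.End ℝ V} {γ : LinearMap.BilinForm ℝ V} {m p q n : ℕ} {e : Fin n → V}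

namespace IsCanonicalFrame

variable (h : IsCanonicalFrame S γ m p q e)
include h

theorem linearIndependent : LinearIndependent ℝ e := by
  rw [Fintype.linearIndependent_iff]
  intro g hg i
  obtain ⟨k, hkn, hki, hk⟩ :=
    exists_canonicalGram_ne_zero_and_eq_zero_of_ne (i.isLt.trans_eq h.card_eq)
  have hpair : γ (e ⟨k, hkn.trans_eq h.card_eq.symm⟩) (∑ j, g j • e j) =
      g i * canonicalGram m p q k i := by
    simp only [map_sum, map_smul, smul_eq_mul, h.gram]
    refine Finset.sum_eq_single i (fun j _ hji => ?_) (by simp)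
    rw [hk j (Fin.val_ne_of_ne hji), mul_zero]
  rw [hg, map_zero] at hpair
  exact (mul_eq_zero.mp hpair.symm).resolve_right hki

lemma apply_mem_span_image_lt_pred (i : ι) {k : ℕ} {x : V}
    (hx : x ∈ span ℝ (e '' {j | (j : ℕ) < k})) :
    S i x ∈ span ℝ (e '' {j | (j : ℕ) < k - 1}) := by
  refine (span_le (p := (span ℝ _).comap (S i))).mpr ?_ hx
  rintro _ ⟨j, hjk : (j : ℕ) < k, rfl⟩
  refine span_mono (Set.image_mono fun l (hlj : l < j) => ?_) (h.triangular i j)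
  change (l : ℕ) < k - 1
  have := Fin.lt_def.mp hlj
  omega

end IsCanonicalFrame

end Frames

section Compression

variable {V : Type*} [AddCommGroup V] [Module ℝ V] {ι : Type*} {W : Submodule ℝ V}
  {γ : LinearMap.BilinForm ℝ V}

structure IsOrthogonalProjection (γ : LinearMap.BilinForm ℝ V) (π : V →ₗ[ℝ] W) : Prop where
  apply_coe : ∀ w : W, π w = w
  apply_right : ∀ (w : W) (v : V), γ w (π v) = γ w v

def compress (π : V →ₗ[ℝ] W) (f : Module.End ℝ V) : Module.End ℝ W := π ∘ₗ f ∘ₗ W.subtype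

@[simp] lemma compress_apply (π : V →ₗ[ℝ] W) (f : Module.End ℝ V) (w : W) :
    compress π f w = π (f w) := rfl

namespace IsOrthogonalProjection

variable {π : V →ₗ[ℝ] W} (hπ : IsOrthogonalProjection γ π)
include hπ

lemma separatingLeft_restrict (hγ : γ.SeparatingLeft) : (γ.restrict W).SeparatingLeft := by
  intro u hu
  refine Subtype.ext (hγ u fun v => ?_)
  rw [← hπ.apply_right]
  exact hu (π v)

lemma isSelfAdjoint_compress (hγ : γ.IsSymm) {f : Module.End ℝ V} (hf : γ.IsSelfAdjoint f) :
    (γ.restrict W).IsSelfAdjoint (compress π f) := by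
  intro u w
  simp only [LinearMap.BilinForm.restrict_apply, LinearMap.domRestrict_apply, compress_apply]
  rw [hγ.eq, hπ.apply_right, ← hγ.eq, hf, hπ.apply_right]

lemma jointlyNilpotent_compress {S : ι → Module.End ℝ V} {B : Submodule ℝ V}
    (hB : ∀ i, ∀ b ∈ B, S i b ∈ B) (hWB : W ≤ B) (hSπ : ∀ i, ∀ b ∈ B, S i (π b) = S i b)
    (hS : JointlyNilpotent S) : JointlyNilpotent fun i => compress π (S i) :=
  hS.of_intertwining π hB (fun i b hb => by rw [compress_apply, hSπ i b hb])
    fun w => ⟨w, hWB w.2, hπ.apply_coe w⟩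

end IsOrthogonalProjection

noncomputable def projKer (γ : LinearMap.BilinForm ℝ V) (x : V) (hx : γ x x ≠ 0) :
    V →ₗ[ℝ] LinearMap.ker (γ x) :=
  (LinearMap.id - (γ x).smulRight ((γ x x)⁻¹ • x)).codRestrict _ fun v => by
    simp [hx]

@[simp] lemma coe_projKer_apply (x : V) (hx : γ x x ≠ 0) (v : V) :
    (projKer γ x hx v : V) = v - γ x v • (γ x x)⁻¹ • x := rfl

lemma isOrthogonalProjection_projKer (hγ : γ.IsSymm) (x : V) (hx : γ x x ≠ 0) :
    IsOrthogonalProjection γ (projKer γ x hx) where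
  apply_coe w := Subtype.ext (by simp [LinearMap.mem_ker.mp w.2])
  apply_right w v := by simp [hγ.eq (w : V) x, LinearMap.mem_ker.mp w.2]

def projHyperbolic (γ : LinearMap.BilinForm ℝ V) (x y : V) (hxx : γ x x = 0) (hxy : γ x y = 1)
    (hyx : γ y x = 1) (hyy : γ y y = 0) : V →ₗ[ℝ] ↥(LinearMap.ker (γ x) ⊓ LinearMap.ker (γ y)) :=
  (LinearMap.id - (γ y).smulRight x - (γ x).smulRight y).codRestrict _ fun v => by
    simp [hxx, hxy, hyx, hyy]

@[simp] lemma coe_projHyperbolic_apply (x y : V) (hxx : γ x x = 0) (hxy : γ x y = 1)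
    (hyx : γ y x = 1) (hyy : γ y y = 0) (v : V) :
    (projHyperbolic γ x y hxx hxy hyx hyy v : V) = v - γ y v • x - γ x v • y := rfl

lemma isOrthogonalProjection_projHyperbolic (hγ : γ.IsSymm) (x y : V) (hxx : γ x x = 0)
    (hxy : γ x y = 1) (hyx : γ y x = 1) (hyy : γ y y = 0) :
    IsOrthogonalProjection γ (projHyperbolic γ x y hxx hxy hyx hyy) := by
  have hW (w : ↥(LinearMap.ker (γ x) ⊓ LinearMap.ker (γ y))) : γ x w = 0 ∧ γ y w = 0 :=
    mem_inf.mp w.2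
  constructor
  · intro w
    exact Subtype.ext (by simp [hW w])
  · intro w v
    simp [hγ.eq (w : V) x, hγ.eq (w : V) y, hW w]

end Compression

lemma Fin.val_succAbove_eq_ite {n : ℕ} (s : Fin (n + 1)) (j : Fin n) :
    (s.succAbove j : ℕ) = if (j : ℕ) < s then (j : ℕ) else (j : ℕ) + 1 := by
  unfold Fin.succAbove
  split_ifs <;> simp_all [Fin.lt_def]

section FrameConstruction

variable {V : Type*} [AddCommGroup V] [Module ℝ V] {ι : Type*} {S : ι → Module.End ℝ V}
  {γ : LinearMap.BilinForm ℝ V}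

lemma apply_mem_ker_of_apply_eq_zero {f : Module.End ℝ V} (hf : γ.IsSelfAdjoint f) {x : V}
    (hx : f x = 0) (v : V) : f v ∈ LinearMap.ker (γ x) := by
  rw [LinearMap.mem_ker, ← hf, hx, map_zero, LinearMap.zero_apply]

lemma coe_mem_span_image_Iio {α β : Type*} [Preorder α] [Preorder β] {W : Submodule ℝ V}
    {e : α → W} {e' : β → V} {σ : α → β} (hσ : StrictMono σ) (he : ∀ j, e' (σ j) = e j)
    {k : α} {w : W} (hw : w ∈ span ℝ (e '' Set.Iio k)) :
    (w : V) ∈ span ℝ (e' '' Set.Iio (σ k)) := by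
  have hw' : (w : V) ∈ span ℝ (W.subtype '' (e '' Set.Iio k)) := by
    rw [span_image]
    exact mem_map_of_mem hw
  refine span_mono ?_ hw'
  rintro _ ⟨_, ⟨j, hj, rfl⟩, rfl⟩
  exact ⟨σ j, hσ hj, he j⟩

lemma coe_mem_span_image_of_span_eq_top {α β : Type*} {W : Submodule ℝ V} {e : α → W}
    (he : span ℝ (Set.range e) = ⊤) {e' : β → V} {σ : α → β} (he' : ∀ j, e' (σ j) = e j)
    {s : Set β} (hs : ∀ j, σ j ∈ s) (w : W) : (w : V) ∈ span ℝ (e' '' s) := by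
  have hw : (w : V) ∈ span ℝ (W.subtype '' Set.range e) := by
    rw [span_image, he]
    exact mem_map_of_mem mem_top
  refine span_mono ?_ hw
  rintro _ ⟨_, ⟨j, rfl⟩, rfl⟩
  exact ⟨σ j, hs j, he' j⟩

variable {m p q N : ℕ}

theorem exists_isCanonicalFrame_insertNth (hγ : γ.IsSymm) (hS : ∀ i, γ.IsSelfAdjoint (S i))
    {x : V} (hx : ∀ i, S i x = 0) (hxx : γ x x ≠ 0) {e : Fin N → LinearMap.ker (γ x)}
    (he : IsCanonicalFrame (fun i => compress (projKer γ x hxx) (S i)) (γ.restrict _) m p q e)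
    {p' q' : ℕ} (hsign : (γ x x = 1 ∧ p' = p + 1 ∧ q' = q) ∨ (γ x x = -1 ∧ p' = p ∧ q' = q + 1)) :
    ∃ e' : Fin (N + 1) → V, IsCanonicalFrame S γ m p' q' e' := by
  have hN := he.card_eq
  obtain ⟨hpp', hp'p, hpq⟩ : p ≤ p' ∧ p' ≤ p + 1 ∧ p' + q' = p + q + 1 := by omega
  set π := projKer γ x hxx
  -- `x` becomes the last vector with `γ = 1` or the first with `γ = -1`
  set s : Fin (N + 1) := ⟨m + p, by omega⟩
  set e' : Fin (N + 1) → V := Fin.insertNth s x fun j => (e j : V)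
  have he's : e' s = x := Fin.insertNth_apply_same ..
  have he'σ (j : Fin N) : e' (s.succAbove j) = e j := Fin.insertNth_apply_succAbove ..
  have hσ (j : Fin N) : (s.succAbove j : ℕ) = if (j : ℕ) < m + p then (j : ℕ) else (j : ℕ) + 1 :=
    Fin.val_succAbove_eq_ite s j
  have hxW (w : LinearMap.ker (γ x)) : γ x w = 0 := w.2
  have hSW (i) (w : LinearMap.ker (γ x)) : (compress π (S i) w : V) = S i w :=
    congrArg Subtype.val <| (isOrthogonalProjection_projKer hγ x hxx).apply_coe
      ⟨_, apply_mem_ker_of_apply_eq_zero (hS i) (hx i) w⟩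
  refine ⟨e', by omega, ?_, fun i k => ?_, fun k l => ?_⟩
  · refine eq_top_iff.mpr fun v _ => ?_
    have hv : v = π v + γ x v • (γ x x)⁻¹ • x := by simp [π]
    rw [hv, ← Set.image_univ]
    exact add_mem
      (coe_mem_span_image_of_span_eq_top he.span_eq_top he'σ (fun _ => Set.mem_univ _) _)
      (smul_mem _ _ (smul_mem _ _ (subset_span ⟨s, trivial, he's⟩)))
  · refine Fin.succAboveCases s ?_ (fun j => ?_) k
    · simp [he's, hx]
    · rw [he'σ, ← hSW]
      exact coe_mem_span_image_Iio (Fin.strictMono_succAbove s) he'σ (he.triangular i j)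
  · refine Fin.succAboveCases s ?_ (fun i => ?_) k <;>
      refine Fin.succAboveCases s ?_ (fun j => ?_) l
    · rw [he's]
      change γ x x = canonicalGram m p' q' (m + p) (m + p)
      rcases hsign with ⟨h, rfl, rfl⟩ | ⟨h, rfl, rfl⟩ <;> rw [h] <;> unfold canonicalGram <;>
        split_ifs <;> first | omega | norm_num
    · rw [he'σ, he's, hxW, hσ]
      exact (canonicalGram_insert_row hpq j).symm
    · rw [he'σ, he's, hγ.eq, hxW, canonicalGram_comm, hσ]
      exact (canonicalGram_insert_row hpq i).symm
    · rw [he'σ, he'σ, hσ, hσ, canonicalGram_insert hpp' hp'p hpq]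
      exact he.gram i j

theorem exists_isCanonicalFrame_cons_snoc (hγ : γ.IsSymm) (hS : ∀ i, γ.IsSelfAdjoint (S i))
    {x y : V} (hx : ∀ i, S i x = 0) (hxx : γ x x = 0) (hxy : γ x y = 1) (hyx : γ y x = 1)
    (hyy : γ y y = 0) {e : Fin N → ↥(LinearMap.ker (γ x) ⊓ LinearMap.ker (γ y))}
    (he : IsCanonicalFrame (fun i => compress (projHyperbolic γ x y hxx hxy hyx hyy) (S i))
      (γ.restrict _) m p q e) :
    ∃ e' : Fin (N + 2) → V, IsCanonicalFrame S γ (m + 1) p q e' := by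
  have hN := he.card_eq
  set π := projHyperbolic γ x y hxx hxy hyx hyy
  set σ : Fin N → Fin (N + 2) := fun j => j.castSucc.succ
  have hσ : StrictMono σ := Fin.strictMono_succ.comp Fin.strictMono_castSucc
  set e' : Fin (N + 2) → V := Fin.cons x (Fin.snoc (fun j => (e j : V)) y)
  have he'0 : e' 0 = x := Fin.cons_zero ..
  have he'last : e' (Fin.last N).succ = y := by simp [e']
  have he'σ (j : Fin N) : e' (σ j) = e j := by simp [e', σ]
  have hxW (w : ↥(LinearMap.ker (γ x) ⊓ LinearMap.ker (γ y))) : γ x w = 0 := (mem_inf.mp w.2).1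
  have hyW (w : ↥(LinearMap.ker (γ x) ⊓ LinearMap.ker (γ y))) : γ y w = 0 := (mem_inf.mp w.2).2
  have hdecomp (v : V) : v = π v + γ y v • x + γ x v • y := by
    rw [coe_projHyperbolic_apply]
    abel
  have hxS (i) (v : V) : γ x (S i v) = 0 := apply_mem_ker_of_apply_eq_zero (hS i) (hx i) v
  have hx_mem {k : Fin (N + 2)} (hk : 0 < k) : x ∈ span ℝ (e' '' Set.Iio k) :=
    subset_span ⟨0, hk, he'0⟩
  refine ⟨e', by omega, ?_, fun i k => ?_, fun k l => ?_⟩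
  · refine eq_top_iff.mpr fun v _ => ?_
    rw [hdecomp v, ← Set.image_univ]
    refine add_mem (add_mem ?_ (smul_mem _ _ (subset_span ⟨0, trivial, he'0⟩)))
      (smul_mem _ _ (subset_span ⟨(Fin.last N).succ, trivial, he'last⟩))
    exact coe_mem_span_image_of_span_eq_top he.span_eq_top he'σ (fun _ => Set.mem_univ _) _
  · refine Fin.cases (by simp [he'0, hx]) (fun k => ?_) k
    refine Fin.lastCases ?_ (fun j => ?_) k
    · rw [he'last, hdecomp (S i y), hxS, zero_smul, add_zero]
      refine add_mem ?_ (smul_mem _ _ (hx_mem (Fin.succ_pos _)))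
      exact coe_mem_span_image_of_span_eq_top he.span_eq_top he'σ
        (fun j => Fin.succ_lt_succ_iff.mpr (Fin.castSucc_lt_last j)) _
    · rw [show j.castSucc.succ = σ j from rfl, he'σ, hdecomp (S i _), hxS, zero_smul, add_zero]
      exact add_mem (coe_mem_span_image_Iio hσ he'σ (he.triangular i j))
        (smul_mem _ _ (hx_mem (Fin.succ_pos _)))
  · have hcases (k : Fin (N + 2)) : k = 0 ∨ k = (Fin.last N).succ ∨ ∃ j, k = σ j := by
      refine Fin.cases (Or.inl rfl) (fun k => Or.inr ?_) k
      exact Fin.lastCases (Or.inl rfl) (fun j => Or.inr ⟨j, rfl⟩) k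
    rcases hcases k with rfl | rfl | ⟨i, rfl⟩ <;> rcases hcases l with rfl | rfl | ⟨j, rfl⟩
    all_goals simp only [he'0, he'last, he'σ, hxx, hxy, hyx, hyy, hxW, hyW, hγ.eq _ x, hγ.eq _ y,
      σ, Fin.val_zero, Fin.val_succ, Fin.val_last, Fin.val_castSucc]
    all_goals first
      | (rw [canonicalGram_succ_succ]; exact he.gram i j)
      | (unfold canonicalGram; split_ifs <;> first | omega | (norm_num; done) | tauto)

end FrameConstruction

section Existence

lemma exists_mul_self_mul_eq_one_or_neg_one {c : ℝ} (hc : c ≠ 0) :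
    ∃ t : ℝ, t * t * c = 1 ∨ t * t * c = -1 := by
  refine ⟨(√|c|)⁻¹, ?_⟩
  rw [← mul_inv, Real.mul_self_sqrt (abs_nonneg c)]
  rcases abs_cases c with ⟨h, _⟩ | ⟨h, _⟩ <;> rw [h]
  · exact Or.inl (inv_mul_cancel₀ hc)
  · exact Or.inr (by field_simp)

variable {V : Type*} [AddCommGroup V] [Module ℝ V] {γ : LinearMap.BilinForm ℝ V}

lemma exists_isotropic_partner (hγ : γ.IsSymm) (hγ' : γ.SeparatingLeft) {x : V} (hx : x ≠ 0)
    (hxx : γ x x = 0) : ∃ y, γ x y = 1 ∧ γ y y = 0 := by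
  obtain ⟨w, hw⟩ : ∃ w, γ x w ≠ 0 := by
    by_contra! h
    exact hx (hγ' x h)
  set y := (γ x w)⁻¹ • w
  have hxy : γ x y = 1 := by simp [y, hw]
  refine ⟨y - (γ y y / 2) • x, by simp [hxy, hxx], ?_⟩
  simp [hxx, hxy, hγ.eq y x]
  ring

theorem exists_isCanonicalFrame [FiniteDimensional ℝ V] {ι : Type*} {S : ι → Module.End ℝ V}
    (hγ : γ.IsSymm) (hγ' : γ.SeparatingLeft) (hS : ∀ i, γ.IsSelfAdjoint (S i))
    (hnil : JointlyNilpotent S) : ∃ (n m p q : ℕ) (e : Fin n → V), IsCanonicalFrame S γ m p q e := by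
  induction hd : finrank ℝ V using Nat.strong_induction_on generalizing V with
  | _ d ih =>
  have frame_compress (W : Submodule ℝ V) (π : V →ₗ[ℝ] W) (hπ : IsOrthogonalProjection γ π)
      (hW : W ≠ ⊤) (B : Submodule ℝ V) (hB : ∀ i, ∀ b ∈ B, S i b ∈ B) (hWB : W ≤ B)
      (hSπ : ∀ i, ∀ b ∈ B, S i (π b) = S i b) :
      ∃ (n m p q : ℕ) (e : Fin n → W),
        IsCanonicalFrame (fun i => compress π (S i)) (γ.restrict W) m p q e :=
    ih _ (hd ▸ Submodule.finrank_lt hW) (hγ.restrict W) (hπ.separatingLeft_restrict hγ')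
      (fun i => hπ.isSelfAdjoint_compress hγ (hS i)) (hπ.jointlyNilpotent_compress hB hWB hSπ hnil)
      rfl
  rcases subsingleton_or_nontrivial V with hV | hV
  · exact ⟨0, 0, 0, 0, Fin.elim0, rfl, Subsingleton.elim _ _, fun _ k => k.elim0, fun k => k.elim0⟩
  by_cases hA : ∃ x, (∀ i, S i x = 0) ∧ γ x x ≠ 0
  · obtain ⟨x₀, hx₀, hxx₀⟩ := hA
    obtain ⟨t, ht⟩ := exists_mul_self_mul_eq_one_or_neg_one hxx₀
    set x := t • x₀
    have hx (i) : S i x = 0 := by simp [x, hx₀ i]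
    have hsign : γ x x = 1 ∨ γ x x = -1 := by simpa [x, mul_assoc] using ht
    have hxx : γ x x ≠ 0 := by rcases hsign with h | h <;> simp [h]
    have hπ := isOrthogonalProjection_projKer hγ x hxx
    obtain ⟨n, m, p, q, e, he⟩ := frame_compress _ _ hπ
      (fun h => hxx (LinearMap.mem_ker.mp (h ▸ mem_top : x ∈ LinearMap.ker (γ x))))
      _ (fun i b _ => apply_mem_ker_of_apply_eq_zero (hS i) (hx i) b) le_rfl
      (fun i b hb => by rw [hπ.apply_coe ⟨b, hb⟩])
    rcases hsign with h | h
    · obtain ⟨e', he'⟩ := exists_isCanonicalFrame_insertNth hγ hS hx hxx he (Or.inl ⟨h, rfl, rfl⟩)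
      exact ⟨_, _, _, _, e', he'⟩
    · obtain ⟨e', he'⟩ := exists_isCanonicalFrame_insertNth hγ hS hx hxx he (Or.inr ⟨h, rfl, rfl⟩)
      exact ⟨_, _, _, _, e', he'⟩
  · obtain ⟨x, hx0, hx⟩ := hnil.exists_ne_zero_forall_eq_zero
    have hxx : γ x x = 0 := not_not.mp fun h => hA ⟨x, hx, h⟩
    obtain ⟨y, hxy, hyy⟩ := exists_isotropic_partner hγ hγ' hx0 hxx
    have hyx : γ y x = 1 := hγ.eq y x ▸ hxy
    have hπ := isOrthogonalProjection_projHyperbolic hγ x y hxx hxy hyx hyy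
    obtain ⟨n, m, p, q, e, he⟩ := frame_compress _ _ hπ
      (fun h => one_ne_zero <| hxy.symm.trans (mem_inf.mp (h ▸ mem_top : y ∈ (_ : Submodule ℝ V))).1)
      (LinearMap.ker (γ x)) (fun i b _ => apply_mem_ker_of_apply_eq_zero (hS i) (hx i) b)
      inf_le_left (fun i b hb => by simp [LinearMap.mem_ker.mp hb, hx i])
    obtain ⟨e', he'⟩ := exists_isCanonicalFrame_cons_snoc hγ hS hx hxx hxy hyx hyy he
    exact ⟨_, _, _, _, e', he'⟩

end Existence

theorem stmt_10_general {J : Type*} [AddCommGroup J] [Module ℝ J] [FiniteDimensional ℝ J] (n : ℕ)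
    (hdim : finrank ℝ J = n)
    (mul : J →ₗ[ℝ] J →ₗ[ℝ] J)
    (hcomm : ∀ u v, mul u v = mul v u)
    (γ : J →ₗ[ℝ] J →ₗ[ℝ] ℝ)
    (hsymm : ∀ u v, γ u v = γ v u)
    (hnd : ∀ u, (∀ v, γ u v = 0) → u = 0)
    (htrace : ∀ u v w, γ (mul u v) w = γ u (mul v w))
    (hnilp : ∃ m, cas mul m = ⊤) :
    ∃ (e : Basis (Fin n) ℝ J) (m : ℕ), 2 * m ≤ n ∧
      -- semi-canonical form, property (i)
      (∀ k, 1 ≤ k → k ≤ n →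
        ∀ x ∈ Submodule.span ℝ (⇑e '' {i : Fin n | (i : ℕ) < k}),
          ∀ y, mul x y ∈ Submodule.span ℝ (⇑e '' {i : Fin n | (i : ℕ) < k - 1})) ∧
      -- the pairs {k, n+1-k}, k ≤ m (0-indexed: {i, n-1-i}, i < m)
      (∀ i j : Fin n, (i : ℕ) < m → (i : ℕ) + (j : ℕ) + 1 = n →
        γ (e i) (e j) = 1 ∧ γ (e i) (e i) = 0 ∧ γ (e j) (e j) = 0) ∧
      -- the singletons (middle indices)
      (∀ i : Fin n, m ≤ (i : ℕ) → (i : ℕ) + m < n →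
        γ (e i) (e i) = 1 ∨ γ (e i) (e i) = -1) ∧
      -- all other entries of γ vanish
      (∀ i j : Fin n,
        ¬((i : ℕ) + (j : ℕ) + 1 = n ∧ ((i : ℕ) < m ∨ (j : ℕ) < m)) →
        ¬(i = j ∧ m ≤ (i : ℕ) ∧ (i : ℕ) + m < n) →
        γ (e i) (e j) = 0) ∧
      -- ordering of the diagonal entries
      (∀ i j : Fin n, m ≤ (i : ℕ) → (i : ℕ) < (j : ℕ) → (j : ℕ) + m < n →
        γ (e i) (e i) ≥ γ (e j) (e j)) := by
  set S : J → Module.End ℝ J := fun y => mul.flip y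
  have hS (y : J) : γ.IsSelfAdjoint (S y) := fun u v => by
    simp [S, htrace, hcomm y v]
  have hnil : JointlyNilpotent S := by
    obtain ⟨k, hk⟩ := hnilp
    exact ⟨k, by rw [← cas_eq_jointUpperSeries, hk]⟩
  obtain ⟨n', m, p, q, e, he⟩ := exists_isCanonicalFrame ⟨hsymm⟩ hnd hS hnil
  let b := Basis.mk he.linearIndependent he.span_eq_top.ge
  obtain rfl : n' = n := by rw [← hdim, finrank_eq_card_basis b, Fintype.card_fin]
  have hb : ⇑b = e := Basis.coe_mk ..
  obtain rfl := he.card_eq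
  refine ⟨b, m, by omega, fun k _ _ x hx y => ?_, fun i j hi hij => ?_, fun i hi hin => ?_,
    fun i j hpair hdiag => ?_, fun i j hi hij hj => ?_⟩ <;> simp only [hb, he.gram] at *
  · exact he.apply_mem_span_image_lt_pred y hx
  · exact canonicalGram_pair hi hij
  · exact canonicalGram_self_eq_one_or_neg_one hi hin
  · exact canonicalGram_eq_zero hpair fun ⟨hij, hdiag'⟩ => hdiag ⟨Fin.ext hij, hdiag'⟩
  · exact canonicalGram_self_le_self_of_lt hi hij hj

/-- every nilpotent metrised real Jordan algebra `(J,γ)` of dimension `n`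
admits a basis `e₁,…,e_n` putting it in semi-canonical form, where in addition the partition
can be chosen to be `{{1,n},…,{m,n+1-m},{m+1},…,{n-m}}` (for some `m` with `2m ≤ n`); i.e.
(in 0-indexed form) `γ(e_i,e_j) = 1` for the antidiagonal pairs `i+j+1 = n` with `i < m` or
`j < m`, `γ(e_i,e_i) = ±1` for the middle indices `m ≤ i < n-m`, all other entries vanish,
and moreover `γ(e_i,e_i) ≥ γ(e_j,e_j)` for middle indices `i < j`. -/
theorem stmt_10 {J : Type*} [AddCommGroup J] [Module ℝ J] [FiniteDimensional ℝ J] (n : ℕ)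
    (hdim : finrank ℝ J = n)
    (mul : J →ₗ[ℝ] J →ₗ[ℝ] J)
    (hcomm : ∀ u v, mul u v = mul v u)
    (hjordan : ∀ u v, mul u (mul (mul u u) v) = mul (mul u u) (mul u v))
    (γ : J →ₗ[ℝ] J →ₗ[ℝ] ℝ)
    (hsymm : ∀ u v, γ u v = γ v u)
    (hnd : ∀ u, (∀ v, γ u v = 0) → u = 0)
    (htrace : ∀ u v w, γ (mul u v) w = γ u (mul v w))
    (hnilp : ∃ m, cas mul m = ⊤) :
    ∃ (e : Basis (Fin n) ℝ J) (m : ℕ), 2 * m ≤ n ∧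
      -- semi-canonical form, property (i)
      (∀ k, 1 ≤ k → k ≤ n →
        ∀ x ∈ Submodule.span ℝ (⇑e '' {i : Fin n | (i : ℕ) < k}),
          ∀ y, mul x y ∈ Submodule.span ℝ (⇑e '' {i : Fin n | (i : ℕ) < k - 1})) ∧
      -- the pairs {k, n+1-k}, k ≤ m (0-indexed: {i, n-1-i}, i < m)
      (∀ i j : Fin n, (i : ℕ) < m → (i : ℕ) + (j : ℕ) + 1 = n →
        γ (e i) (e j) = 1 ∧ γ (e i) (e i) = 0 ∧ γ (e j) (e j) = 0) ∧
      -- the singletons (middle indices)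
      (∀ i : Fin n, m ≤ (i : ℕ) → (i : ℕ) + m < n →
        γ (e i) (e i) = 1 ∨ γ (e i) (e i) = -1) ∧
      -- all other entries of γ vanish
      (∀ i j : Fin n,
        ¬((i : ℕ) + (j : ℕ) + 1 = n ∧ ((i : ℕ) < m ∨ (j : ℕ) < m)) →
        ¬(i = j ∧ m ≤ (i : ℕ) ∧ (i : ℕ) + m < n) →
        γ (e i) (e j) = 0) ∧
      -- ordering of the diagonal entries
      (∀ i j : Fin n, m ≤ (i : ℕ) → (i : ℕ) < (j : ℕ) → (j : ℕ) + m < n →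
        γ (e i) (e i) ≥ γ (e j) (e j)) :=
  stmt_10_general n hdim mul hcomm γ hsymm hnd htrace hnilp
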